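/- Let R be a commutative ℚ-algebra and f : Rⁿ → Rᵐ a polynomial map. If P₁, …, P_p ∈ Rⁿ satisfy the kth-order i-structure condition (every (k+1)-multilinear form on Rⁿ vanishes on every (k+1)-tuple of pairwise differences P_{i_ℓ} − P_{j_ℓ}, each of which lies in D_k(n)), then f(P₁), …, f(P_p) satisfy the kth-order i-structure condition in Rᵐ. -/
import Mathlib

open MvPolynomial Finset

/-- `d ∈ D_k(n)`: every product of `k+1` coordinates of `d` vanishes. -/
def Dk (R : Type*) [CommRing R] (n k : ℕ) : Set (Fin n → R) :=
  {d | ∀ f : Fin (k + 1) → Fin n, ∏ i, d (f i) = 0}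

/-- `DN_k(Rⁿ)`: `(k+1)`-tuples of elements of `D_k(n)` annihilated by every
`(k+1)`-multilinear form on `Rⁿ`. -/
def DN (R : Type*) [CommRing R] (n k : ℕ) (v : Fin (k + 1) → (Fin n → R)) : Prop :=
  (∀ ℓ, v ℓ ∈ Dk R n k) ∧
    ∀ φ : MultilinearMap R (fun _ : Fin (k + 1) => (Fin n → R)) R, φ v = 0

/-- The `k`th-order i-structure condition on a `p`-tuple of points of `Rⁿ`. -/
def iStr (R : Type*) [CommRing R] (n k p : ℕ) (P : Fin p → (Fin n → R)) : Prop :=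
  ∀ i j : Fin (k + 1) → Fin p, (∀ ℓ, i ℓ ≠ j ℓ) →
    DN R n k (fun ℓ => P (i ℓ) - P (j ℓ))

lemma key_lemma {R : Type*} [CommRing R] {n : ℕ} (g : MvPolynomial (Fin n) R)
    (a b : Fin n → R) :
    ∃ c : Fin n → R, eval a g - eval b g = ∑ x, (a x - b x) * c x := by
  have h : eval a g - eval b g ∈ Ideal.span (Set.range fun x => a x - b x) := by
    induction g using MvPolynomial.induction_on with
    | C r => simp
    | add p q hp hq =>
        have := add_mem hp hq
        simp only [map_add]
        convert this using 1
        ring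
    | mul_X p i' hp =>
        simp only [map_mul, eval_X]
        have e : eval a p * a i' - eval b p * b i' =
            (eval a p - eval b p) * a i' + (a i' - b i') * eval b p := by ring
        rw [e]
        exact add_mem (Ideal.mul_mem_right _ _ hp)
          (Ideal.mul_mem_right _ _ (Ideal.subset_span ⟨i', rfl⟩))
  rw [show Ideal.span (Set.range fun x => a x - b x)
      = Submodule.span R (Set.range fun x => a x - b x) from rfl,
    Submodule.mem_span_range_iff_exists_fun] at h
  obtain ⟨c, hc⟩ := h
  refine ⟨c, ?_⟩
  rw [← hc]
  exact Finset.sum_congr rfl fun x _ => by rw [smul_eq_mul, mul_comm]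

/-- a polynomial map `f : Rⁿ → Rᵐ` preserves the `k`th-order
i-structure condition. -/
theorem stmt16 {R : Type*} [CommRing R] [Algebra ℚ R] {n m k p : ℕ}
    (f : Fin m → MvPolynomial (Fin n) R)
    (P : Fin p → (Fin n → R)) (hP : iStr R n k p P) :
    iStr R m k p (fun s i => MvPolynomial.eval (P s) (f i)) := by
  intro i j hij
  set d : Fin (k + 1) → Fin n → R := fun ℓ => P (i ℓ) - P (j ℓ) with hd
  have hDk : ∀ ℓ, d ℓ ∈ Dk R n k := fun ℓ =>
    (hP (fun _ => i ℓ) (fun _ => j ℓ) (fun _ => hij ℓ)).1 0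
  have hφ0 := (hP i j hij).2
  have hc : ∀ (ℓ : Fin (k + 1)) (i' : Fin m), ∃ c : Fin n → R,
      eval (P (i ℓ)) (f i') - eval (P (j ℓ)) (f i') = ∑ x, d ℓ x * c x := by
    intro ℓ i'
    obtain ⟨c, hc⟩ := key_lemma (f i') (P (i ℓ)) (P (j ℓ))
    exact ⟨c, by simpa [hd] using hc⟩
  choose c hc using hc
  set C : Fin (k + 1) → Fin n → (Fin m → R) := fun ℓ x i' => c ℓ i' x with hC
  have hw : (fun ℓ => (fun i' => eval (P (i ℓ)) (f i')) - (fun i' => eval (P (j ℓ)) (f i')))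
      = fun ℓ => ∑ x, d ℓ x • C ℓ x := by
    funext ℓ i'
    simp only [Pi.sub_apply, hc ℓ i', Finset.sum_apply, Pi.smul_apply, smul_eq_mul, hC]
  constructor
  · intro ℓ gg
    show ∏ t, ((fun i' => eval (P (i ℓ)) (f i')) - (fun i' => eval (P (j ℓ)) (f i'))) (gg t) = 0
    rw [congrFun hw ℓ]
    have : ∀ t : Fin (k + 1), (∑ x, d ℓ x • C ℓ x) (gg t) = ∑ x, d ℓ x * c ℓ (gg t) x := by
      intro t; simp [Finset.sum_apply, hC]
    simp_rw [this]
    rw [Finset.prod_univ_sum]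
    refine Finset.sum_eq_zero fun a _ => ?_
    rw [Finset.prod_mul_distrib, hDk ℓ a, zero_mul]
  · intro φ
    show φ (fun ℓ => (fun i' => eval (P (i ℓ)) (f i')) - (fun i' => eval (P (j ℓ)) (f i'))) = 0
    rw [hw]
    rw [MultilinearMap.map_sum]
    refine Finset.sum_eq_zero fun a _ => ?_
    rw [MultilinearMap.map_smul_univ]
    have := hφ0 ((φ fun ℓ => C ℓ (a ℓ)) •
      ((MultilinearMap.mkPiAlgebra R (Fin (k + 1)) R).compLinearMap
        (fun ℓ => LinearMap.proj (a ℓ))))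
    simp only [MultilinearMap.smul_apply, MultilinearMap.compLinearMap_apply,
      MultilinearMap.mkPiAlgebra_apply, LinearMap.proj_apply, smul_eq_mul] at this ⊢
    rw [mul_comm] at this
    exact this
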